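/- Let r ≥ 3, k = 2r-1, and let K be a complete r-uniform r-partite hypergraph with a spanning k-coloring such that the vertex set cannot be covered by r monochromatic components. Then for any two vertices a, b in different partite classes, the Hamming distance of their component vectors satisfies r-1 ≤ δ(a,b) ≤ r. -/

import Mathlib

/-!
Write `A(u,v)` for the set of colors in which `u` and `v` share a monochromatic component, so
that `δ(a,b) = 2r - 1 - |A(a,b)|`.

Since no `r` components cover `V`, for every color `c`, vertex `p` and class `i` some vertex of
class `i` lies outside the `c`-component of `p`. Completing a partial transversal with such
vertices shows that vertices in `m` distinct classes are always joined in some color outside any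
given set of `r - m` colors; for `m = 2` this is `|A(a,b)| ≥ r - 1`, and for `m = 3` it says
`|A(p,w) ∩ A(p,x)| ≥ r - 2`. Likewise, for any `r` colors some vertex avoids all the components
of `a` in these colors; with the lower bound, this realizes every `(r-1)`-set of colors
`T ⊇ A(a,b)ᶜ` as `A(a,v)` or `A(b,v)`.

For the upper bound `|A(a,b)| ≤ r`: if `A(a,b)` contains every color, all the vertices `v_T`
with `A(a,v_T) = T` lie in one class, because `A(v_T, v_S)` misses `T ∆ S` and the odd graph is
connected; yet for a vertex `z` of another class outside some component of `a`, any `T` with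
`|T ∆ A(a,z)| ≥ r + 1` puts `v_T` into the class of `z`.
If `r < |A(a,b)| < 2r - 1`, take (after possibly swapping `a` and `b`) `v` in the class of `b`
with `A(a,v) ⊇ A(a,b)ᶜ` of size `r - 1`. A transversal through `v`, a vertex of the class of `a`
and a vertex of a third class joined to `a` in all colors of `A(a,b)` has a color joining `a` to
`v`, which the remaining vertices of the transversal exclude from `A(a,v)`.
-/

open Classical

variable {V : Type*}

/-- `e` is an edge of the complete `r`-uniform `r`-partite hypergraph with
partition `part`: it meets every class in exactly one vertex. -/
def IsPartiteEdge {r : ℕ} (part : V → Fin r) (e : Finset V) : Prop :=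
  ∀ i : Fin r, (e.filter fun v => part v = i).card = 1

/-- `e` is an edge of the complete `r`-uniform `(r,ℓ)`-partite hypergraph:
an `r`-set meeting every class in at most `ℓ` vertices. -/
def IsRLEdge {r : ℕ} (part : V → Fin r) (ℓ : ℕ) (e : Finset V) : Prop :=
  e.card = r ∧ ∀ i : Fin r, (e.filter fun v => part v = i).card ≤ ℓ

/-- An edge is friendly if it meets at most one class in exactly `ℓ` vertices. -/
def Friendly {r : ℕ} (part : V → Fin r) (ℓ : ℕ) (e : Finset V) : Prop :=
  (Finset.univ.filter fun i : Fin r => (e.filter fun v => part v = i).card = ℓ).card ≤ 1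

/-- `u` and `v` lie in the same monochromatic component of color `c` of the
hypergraph with edge predicate `E` and edge coloring `χ`. -/
def MonoConn {k : ℕ} (E : Finset V → Prop) (χ : Finset V → Fin k) (c : Fin k)
    (u v : V) : Prop :=
  Relation.ReflTransGen (fun a b => ∃ e : Finset V, E e ∧ χ e = c ∧ a ∈ e ∧ b ∈ e) u v

/-- The coloring `χ` is spanning: every vertex is incident with an edge of every color. -/
def Spanning {k : ℕ} (E : Finset V → Prop) (χ : Finset V → Fin k) : Prop :=
  ∀ v : V, ∀ c : Fin k, ∃ e : Finset V, E e ∧ χ e = c ∧ v ∈ e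

/-- The vertex set can be covered by at most `m` monochromatic components. -/
def CoversBy {k : ℕ} (E : Finset V → Prop) (χ : Finset V → Fin k) (m : ℕ) : Prop :=
  ∃ f : Fin m → Fin k × V, ∀ v : V, ∃ i : Fin m, MonoConn E χ (f i).1 (f i).2 v

/-- Hamming distance of the component vectors of two vertices: the number of
colors `c` for which they lie in different monochromatic components of color `c`. -/
noncomputable def HamDist {k : ℕ} (E : Finset V → Prop) (χ : Finset V → Fin k)
    (v w : V) : ℕ :=
  (Finset.univ.filter fun c : Fin k => ¬ MonoConn E χ c v w).card

open scoped symmDiff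

theorem Set.injOn_triple {α β : Type*} {f : α → β} {a b c : α} (hab : f a ≠ f b)
    (hac : f a ≠ f c) (hbc : f b ≠ f c) : Set.InjOn f {a, b, c} := by
  rw [Set.injOn_insert fun h => by rcases h with rfl | rfl <;> simp_all, Set.injOn_pair]
  exact ⟨fun h => absurd h hbc, by rintro ⟨x, rfl | rfl, h⟩ <;> simp_all⟩

namespace Finset

variable {α : Type*} [Fintype α] [DecidableEq α]

/-- Connectedness of the odd graph (the Kneser graph on the `m`-subsets of a `(2m+1)`-set):
swapping one element of `s` for one of `t` passes through the `m`-set disjoint from both. -/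
theorem apply_eq_of_forall_disjoint {β : Type*} {m : ℕ} (hα : Fintype.card α = 2 * m + 1)
    (f : Finset α → β)
    (hf : ∀ s t : Finset α, s.card = m → t.card = m → Disjoint s t → f s = f t)
    {s t : Finset α} (hs : s.card = m) (ht : t.card = m) : f s = f t := by
  obtain ⟨n, hn⟩ : ∃ n, (s \ t).card = n := ⟨_, rfl⟩
  induction n generalizing s with
  | zero =>
    rw [eq_of_subset_of_card_le (sdiff_eq_empty_iff_subset.mp (card_eq_zero.mp hn)) (by omega)]
  | succ n ih =>
    obtain ⟨y, hy⟩ := card_pos.mp (show 0 < (s \ t).card by omega)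
    obtain ⟨x, hx⟩ := card_pos.mp (show 0 < (t \ s).card by
      rw [← card_sdiff_comm (hs.trans ht.symm)]; omega)
    rw [mem_sdiff] at hx hy
    have hw : (insert x s)ᶜ.card = m := by
      rw [card_compl, card_insert_of_notMem hx.2]
      omega
    have hs' : (insert x (s.erase y)).card = m := by
      rw [card_insert_of_notMem (fun h => hx.2 (mem_of_mem_erase h)), card_erase_of_mem hy.1]
      have := card_pos.mpr ⟨y, hy.1⟩
      omega
    calc f s = f (insert x s)ᶜ :=
          hf _ _ hs hw
            (disjoint_compl_right.mono_right (compl_subset_compl.mpr (subset_insert x s)))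
      _ = f (insert x (s.erase y)) :=
          hf _ _ hw hs' (disjoint_compl_left.mono_right
            (insert_subset_insert x (erase_subset y s)))
      _ = f t := ih hs' (by
          rw [insert_sdiff_of_mem _ hx.1, erase_sdiff_comm, card_erase_of_mem
            (mem_sdiff.mpr hy), hn, Nat.add_sub_cancel])

theorem exists_card_eq_le_card_symmDiff {r : ℕ} (hα : Fintype.card α = 2 * r - 1) (hr : 3 ≤ r)
    {P : Finset α} (hP : r - 1 ≤ P.card) (hPu : P ≠ univ) :
    ∃ T : Finset α, T.card = r - 1 ∧ r + 1 ≤ (T ∆ P).card := by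
  have hPc : P.card < 2 * r - 1 := hα ▸ card_lt_card (ssubset_univ_iff.mpr hPu)
  rcases le_or_gt P.card r with h | h
  · obtain ⟨T, hT, hTc⟩ := exists_subset_card_eq (s := Pᶜ) (n := r - 1)
      (by rw [card_compl]; omega)
    have hd : Disjoint T P := subset_compl_iff_disjoint_right.mp hT
    exact ⟨T, hTc, by rw [symmDiff_eq_union hd, card_union_of_disjoint hd]; omega⟩
  · obtain ⟨U, hU, hUc⟩ := exists_subset_card_eq (s := P) (n := r) h.le
    have hd : Disjoint U Pᶜ := subset_compl_iff_disjoint_right.mp (by rwa [compl_compl])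
    refine ⟨Uᶜ, by rw [card_compl]; omega, ?_⟩
    rw [← compl_symmDiff_compl, compl_compl, symmDiff_eq_union hd, card_union_of_disjoint hd,
      card_compl]
    omega

end Finset

section Components

variable {k : ℕ} {E : Finset V → Prop} {χ : Finset V → Fin k}

theorem MonoConn.refl {c : Fin k} (u : V) : MonoConn E χ c u u :=
  Relation.ReflTransGen.refl

theorem MonoConn.symm {c : Fin k} {u v : V} (h : MonoConn E χ c u v) : MonoConn E χ c v u := by
  induction h with
  | refl => exact Relation.ReflTransGen.refl
  | tail _ hab ih =>
    obtain ⟨e, he, hc, hx, hy⟩ := hab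
    exact Relation.ReflTransGen.head ⟨e, he, hc, hy, hx⟩ ih

theorem MonoConn.trans {c : Fin k} {u v w : V} (h₁ : MonoConn E χ c u v)
    (h₂ : MonoConn E χ c v w) : MonoConn E χ c u w :=
  Relation.ReflTransGen.trans h₁ h₂

theorem MonoConn.of_mem {e : Finset V} (he : E e) {u v : V} (hu : u ∈ e) (hv : v ∈ e) :
    MonoConn E χ (χ e) u v :=
  Relation.ReflTransGen.single ⟨e, he, rfl, hu, hv⟩

variable (E χ) in
noncomputable def agreeSet (u v : V) : Finset (Fin k) :=
  Finset.univ.filter fun c => MonoConn E χ c u v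

@[simp]
theorem mem_agreeSet {u v : V} {c : Fin k} : c ∈ agreeSet E χ u v ↔ MonoConn E χ c u v := by
  simp [agreeSet]

theorem agreeSet_comm (u v : V) : agreeSet E χ u v = agreeSet E χ v u := by
  ext c
  simp only [mem_agreeSet]
  exact ⟨MonoConn.symm, MonoConn.symm⟩

theorem card_agreeSet_add_hamDist (u v : V) :
    (agreeSet E χ u v).card + HamDist E χ u v = k := by
  rw [agreeSet, HamDist, Finset.card_filter_add_card_filter_not, Finset.card_univ,
    Fintype.card_fin]

theorem agreeSet_subset_compl_symmDiff (a v w : V) :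
    agreeSet E χ v w ⊆ (agreeSet E χ a v ∆ agreeSet E χ a w)ᶜ := by
  intro c hc
  rw [mem_agreeSet] at hc
  simp only [Finset.mem_compl, Finset.mem_symmDiff, mem_agreeSet, not_or, not_and, not_not]
  exact ⟨fun h => h.trans hc, fun h => h.trans hc.symm⟩

theorem exists_agreeSet_subset {m : ℕ} (hnc : ¬ CoversBy E χ m) {A : Finset (Fin k)}
    (hA : Aᶜ.card = m) (p : V) : ∃ v, agreeSet E χ p v ⊆ A := by
  by_contra h
  push Not at h
  apply hnc
  refine ⟨fun j => ((Aᶜ.orderIsoOfFin hA j : Fin k), p), fun v => ?_⟩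
  obtain ⟨c, hcv, hcA⟩ := Finset.not_subset.mp (h v)
  exact ⟨(Aᶜ.orderIsoOfFin hA).symm ⟨c, Finset.mem_compl.mpr hcA⟩, by simpa using hcv⟩

theorem exists_agreeSet_subset_of_compl_subset {m : ℕ} (hnc : ¬ CoversBy E χ m)
    {A : Finset (Fin k)} (hA : Aᶜ.card = m) {p q : V} (hpq : Aᶜ ⊆ agreeSet E χ p q) :
    ∃ v, agreeSet E χ p v ⊆ A ∧ agreeSet E χ q v ⊆ A := by
  obtain ⟨v, hv⟩ := exists_agreeSet_subset hnc hA p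
  refine ⟨v, hv, fun c hc => ?_⟩
  by_contra hcA
  have hcpq := mem_agreeSet.mp (hpq (Finset.mem_compl.mpr hcA))
  exact hcA (hv (mem_agreeSet.mpr (hcpq.trans (mem_agreeSet.mp hc))))

end Components

section Partite

variable {r k : ℕ} {part : V → Fin r} {χ : Finset V → Fin k}

theorem exists_part_eq_monoConn (hs : Spanning (IsPartiteEdge part) χ) (v : V) (c : Fin k)
    (i : Fin r) : ∃ w, part w = i ∧ MonoConn (IsPartiteEdge part) χ c v w := by
  obtain ⟨e, he, rfl, hv⟩ := hs v c
  obtain ⟨w, hw⟩ := Finset.card_eq_one.mp (he i)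
  have hwe : w ∈ e.filter fun v => part v = i := hw ▸ Finset.mem_singleton_self w
  rw [Finset.mem_filter] at hwe
  exact ⟨w, hwe.2, MonoConn.of_mem he hv hwe.1⟩

theorem exists_part_eq_not_monoConn (hr : 2 ≤ r) (hs : Spanning (IsPartiteEdge part) χ)
    (hnc : ¬ CoversBy (IsPartiteEdge part) χ r) (d : Fin k) (p q : V) (i : Fin r) :
    ∃ x, part x = i ∧ ¬ MonoConn (IsPartiteEdge part) χ d p x ∧
      ¬ MonoConn (IsPartiteEdge part) χ d q x := by
  by_contra h
  push Not at h
  apply hnc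
  refine ⟨fun j => if j.val = 0 then (d, p) else (d, q), fun v => ?_⟩
  obtain ⟨w, hw, hvw⟩ := exists_part_eq_monoConn hs v d i
  by_cases hpw : MonoConn (IsPartiteEdge part) χ d p w
  · exact ⟨⟨0, by omega⟩, by simpa using hpw.trans hvw.symm⟩
  · exact ⟨⟨1, by omega⟩, by simpa using (h w hw hpw).trans hvw.symm⟩

theorem isPartiteEdge_of_injOn {X : Finset V} (hX : Set.InjOn part X) (hcard : X.card = r) :
    IsPartiteEdge part X := by
  intro i
  have himage : X.image part = Finset.univ := Finset.eq_univ_of_card _ (by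
    rw [Finset.card_image_of_injOn hX, hcard, Fintype.card_fin])
  obtain ⟨u, hu, rfl⟩ := Finset.mem_image.mp (himage ▸ Finset.mem_univ i)
  refine le_antisymm (Finset.card_le_one.mpr fun v hv w hw => ?_)
    (Finset.card_pos.mpr ⟨u, Finset.mem_filter.mpr ⟨hu, rfl⟩⟩)
  rw [Finset.mem_filter] at hv hw
  exact hX hv.1 hw.1 (hv.2.trans hw.2.symm)

/-- Extend `X` class by class to a transversal, putting into each new class a vertex outside
the `c`-component of `p` for one more color `c ∈ K`; the color of the transversal works. -/
theorem exists_color_connecting [NeZero k] (hr : 2 ≤ r) (hs : Spanning (IsPartiteEdge part) χ)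
    (hnc : ¬ CoversBy (IsPartiteEdge part) χ r) (p : V) (X : Finset V) (K : Finset (Fin k))
    (hX : Set.InjOn part X) (hXK : X.card + K.card ≤ r) :
    ∃ γ, (∀ u ∈ X, ∀ v ∈ X, MonoConn (IsPartiteEdge part) χ γ u v) ∧
      (γ ∈ K → ∀ u ∈ X, ¬ MonoConn (IsPartiteEdge part) χ γ p u) := by
  obtain ⟨n, hn⟩ : ∃ n, r - X.card = n := ⟨_, rfl⟩
  induction n generalizing X K with
  | zero =>
    have hK : K = ∅ := Finset.card_eq_zero.mp (by omega)
    exact ⟨χ X, fun u hu v hv => MonoConn.of_mem (isPartiteEdge_of_injOn hX (by omega)) hu hv,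
      by simp [hK]⟩
  | succ n ih =>
    obtain ⟨i, -, hi⟩ := Finset.exists_mem_notMem_of_card_lt_card (s := X.image part)
      (t := Finset.univ) (by rw [Finset.card_univ, Fintype.card_fin]; grind [Finset.card_image_le])
    obtain ⟨c, hc⟩ : ∃ c : Fin k, K.Nonempty → c ∈ K :=
      K.eq_empty_or_nonempty.elim (fun h => ⟨0, by simp [h]⟩) fun ⟨c, hc⟩ => ⟨c, fun _ => hc⟩
    obtain ⟨y, rfl, hpy, -⟩ := exists_part_eq_not_monoConn hr hs hnc c p p i
    have hyX : y ∉ X := fun h => hi (Finset.mem_image_of_mem part h)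
    have hX' : Set.InjOn part ↑(insert y X) := by
      rw [Finset.coe_insert, Set.injOn_insert (by simpa using hyX)]
      exact ⟨hX, by simpa using hi⟩
    have hXK' : (insert y X).card + (K.erase c).card ≤ r := by
      rw [Finset.card_insert_of_notMem hyX]
      rcases K.eq_empty_or_nonempty with hK | hK
      · simp only [hK, Finset.erase_empty, Finset.card_empty]
        omega
      · rw [Finset.card_erase_of_mem (hc hK)]
        have := hK.card_pos
        omega
    obtain ⟨γ, hconn, havoid⟩ := ih (insert y X) (K.erase c) hX' hXK'
      (by rw [Finset.card_insert_of_notMem hyX]; omega)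
    refine ⟨γ, fun u hu v hv => hconn u (Finset.mem_insert_of_mem hu) v
      (Finset.mem_insert_of_mem hv), fun hγ u hu hpu => ?_⟩
    by_cases hγc : γ = c
    · subst hγc
      exact hpy (hpu.trans (hconn u (Finset.mem_insert_of_mem hu) y (Finset.mem_insert_self y X)))
    · exact havoid (Finset.mem_erase.mpr ⟨hγc, hγ⟩) u (Finset.mem_insert_of_mem hu) hpu

theorem exists_color_connecting_notMem [NeZero k] (hr : 2 ≤ r)
    (hs : Spanning (IsPartiteEdge part) χ) (hnc : ¬ CoversBy (IsPartiteEdge part) χ r)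
    {X : Finset V} {K : Finset (Fin k)} (hX : Set.InjOn part X) (hXK : X.card + K.card ≤ r)
    {p : V} (hp : p ∈ X) :
    ∃ γ ∉ K, ∀ u ∈ X, ∀ v ∈ X, MonoConn (IsPartiteEdge part) χ γ u v := by
  obtain ⟨γ, hconn, havoid⟩ := exists_color_connecting hr hs hnc p X K hX hXK
  exact ⟨γ, fun hγ => havoid hγ p hp (MonoConn.refl p), hconn⟩

theorem le_card_agreeSet [NeZero k] (hr : 2 ≤ r) (hs : Spanning (IsPartiteEdge part) χ)
    (hnc : ¬ CoversBy (IsPartiteEdge part) χ r) {a b : V} (hab : part a ≠ part b) :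
    r - 1 ≤ (agreeSet (IsPartiteEdge part) χ a b).card := by
  by_contra! h
  have hX : Set.InjOn part ↑({a, b} : Finset V) := by
    rw [Finset.coe_pair, Set.injOn_pair]
    exact fun h => absurd h hab
  obtain ⟨γ, hγ, hconn⟩ := exists_color_connecting_notMem hr hs hnc hX
    (K := agreeSet (IsPartiteEdge part) χ a b)
    (by have := Finset.card_le_two (a := a) (b := b); omega) (Finset.mem_insert_self a {b})
  exact hγ (mem_agreeSet.mpr (hconn a (by simp) b (by simp)))

theorem le_card_agreeSet_inter [NeZero k] (hr : 2 ≤ r) (hs : Spanning (IsPartiteEdge part) χ)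
    (hnc : ¬ CoversBy (IsPartiteEdge part) χ r) {p w x : V} (hpw : part p ≠ part w)
    (hpx : part p ≠ part x) (hwx : part w ≠ part x) :
    r - 2 ≤ (agreeSet (IsPartiteEdge part) χ p w ∩ agreeSet (IsPartiteEdge part) χ p x).card := by
  by_contra! h
  obtain ⟨γ, hγ, hconn⟩ := exists_color_connecting_notMem hr hs hnc
    (X := {p, w, x}) (by simpa using Set.injOn_triple hpw hpx hwx)
    (K := agreeSet (IsPartiteEdge part) χ p w ∩ agreeSet (IsPartiteEdge part) χ p x)
    (by have := Finset.card_le_three (a := p) (b := w) (c := x); omega)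
    (Finset.mem_insert_self p {w, x})
  exact hγ (Finset.mem_inter.mpr ⟨mem_agreeSet.mpr (hconn p (by simp) w (by simp)),
    mem_agreeSet.mpr (hconn p (by simp) x (by simp))⟩)

theorem mem_agreeSet_or_mem_agreeSet [NeZero k] (hr : 2 ≤ r)
    (hs : Spanning (IsPartiteEdge part) χ) (hnc : ¬ CoversBy (IsPartiteEdge part) χ r)
    {p w x : V} (hpw : part p ≠ part w) (hpx : part p ≠ part x) (hwx : part w ≠ part x)
    (hcard : (agreeSet (IsPartiteEdge part) χ p w).card = r - 1) {c d : Fin k}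
    (hc : c ∈ agreeSet (IsPartiteEdge part) χ p w) (hd : d ∈ agreeSet (IsPartiteEdge part) χ p w)
    (hcd : c ≠ d) :
    c ∈ agreeSet (IsPartiteEdge part) χ p x ∨ d ∈ agreeSet (IsPartiteEdge part) χ p x := by
  by_contra! h
  have hsub : agreeSet (IsPartiteEdge part) χ p w ∩ agreeSet (IsPartiteEdge part) χ p x ⊆
      ((agreeSet (IsPartiteEdge part) χ p w).erase c).erase d := by
    intro e he
    rw [Finset.mem_inter] at he
    exact Finset.mem_erase.mpr ⟨fun hed => h.2 (hed ▸ he.2),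
      Finset.mem_erase.mpr ⟨fun hec => h.1 (hec ▸ he.2), he.1⟩⟩
  have hle := Finset.card_le_card hsub
  rw [Finset.card_erase_of_mem (Finset.mem_erase.mpr ⟨hcd.symm, hd⟩),
    Finset.card_erase_of_mem hc, hcard] at hle
  have := le_card_agreeSet_inter hr hs hnc hpw hpx hwx
  omega

end Partite

section OddColors

variable {r : ℕ} {part : V → Fin r} {χ : Finset V → Fin (2 * r - 1)}

theorem part_eq_of_le_card_symmDiff (hr : 2 ≤ r) (hs : Spanning (IsPartiteEdge part) χ)
    (hnc : ¬ CoversBy (IsPartiteEdge part) χ r) {a v w : V}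
    (h : r + 1 ≤ (agreeSet (IsPartiteEdge part) χ a v ∆
      agreeSet (IsPartiteEdge part) χ a w).card) : part v = part w := by
  have : NeZero (2 * r - 1) := ⟨by omega⟩
  by_contra hvw
  have hlow := le_card_agreeSet hr hs hnc hvw
  have hup := Finset.card_le_card
    (agreeSet_subset_compl_symmDiff (E := IsPartiteEdge part) (χ := χ) a v w)
  rw [Finset.card_compl, Fintype.card_fin] at hup
  omega

theorem exists_agreeSet_eq (hr : 2 ≤ r) (hs : Spanning (IsPartiteEdge part) χ)
    (hnc : ¬ CoversBy (IsPartiteEdge part) χ r) {p q : V} (hpq : part p ≠ part q)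
    {d : Fin (2 * r - 1)} (hd : d ∉ agreeSet (IsPartiteEdge part) χ p q)
    {A : Finset (Fin (2 * r - 1))} (hA : A.card = r - 1)
    (hAS : (agreeSet (IsPartiteEdge part) χ p q)ᶜ ⊆ A) :
    ∃ v, (part v = part q ∧ agreeSet (IsPartiteEdge part) χ p v = A) ∨
      (part v = part p ∧ agreeSet (IsPartiteEdge part) χ q v = A) := by
  have : NeZero (2 * r - 1) := ⟨by omega⟩
  have hAc : Aᶜ.card = r := by
    rw [Finset.card_compl, Fintype.card_fin, hA]
    omega
  obtain ⟨v, hpv, hqv⟩ :=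
    exists_agreeSet_subset_of_compl_subset hnc hAc (compl_le_iff_compl_le.mp hAS)
  have heq : ∀ u, part u ≠ part v → agreeSet (IsPartiteEdge part) χ u v ⊆ A →
      agreeSet (IsPartiteEdge part) χ u v = A := fun u hu hsub =>
    Finset.eq_of_subset_of_card_le hsub (hA ▸ le_card_agreeSet hr hs hnc hu)
  by_cases hvq : part v = part q
  · exact ⟨v, Or.inl ⟨hvq, heq p (hvq ▸ hpq) hpv⟩⟩
  by_cases hvp : part v = part p
  · exact ⟨v, Or.inr ⟨hvp, heq q (hvp ▸ hpq.symm) hqv⟩⟩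
  -- a vertex in a third class would join `p` and `q` in the color `d ∈ A`
  have hdA : d ∈ A := hAS (Finset.mem_compl.mpr hd)
  have hdp := mem_agreeSet.mp ((heq p (Ne.symm hvp) hpv).symm ▸ hdA)
  have hdq := mem_agreeSet.mp ((heq q (Ne.symm hvq) hqv).symm ▸ hdA)
  exact absurd (mem_agreeSet.mpr (hdp.trans hdq.symm)) hd

theorem exists_part_eq_agreeSet_subset (hr : 3 ≤ r) (hs : Spanning (IsPartiteEdge part) χ)
    (hnc : ¬ CoversBy (IsPartiteEdge part) χ r) {p q : V} (hpq : part p ≠ part q)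
    (hS : r + 1 ≤ (agreeSet (IsPartiteEdge part) χ p q).card)
    {d : Fin (2 * r - 1)} (hd : d ∉ agreeSet (IsPartiteEdge part) χ p q)
    {i : Fin r} (hip : i ≠ part p) (hiq : i ≠ part q) :
    ∃ x, part x = i ∧ d ∉ agreeSet (IsPartiteEdge part) χ p x ∧
      agreeSet (IsPartiteEdge part) χ p q ⊆ agreeSet (IsPartiteEdge part) χ p x := by
  have : NeZero (2 * r - 1) := ⟨by omega⟩
  obtain ⟨x, rfl, hpx, hqx⟩ := exists_part_eq_not_monoConn (by omega) hs hnc d p q i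
  refine ⟨x, rfl, fun h => hpx (mem_agreeSet.mp h), fun c hc => ?_⟩
  by_contra hcx
  have hcq : c ∉ agreeSet (IsPartiteEdge part) χ q x := fun h =>
    hcx (mem_agreeSet.mpr ((mem_agreeSet.mp hc).trans (mem_agreeSet.mp h)))
  obtain ⟨A, hcA, -, hA⟩ := Finset.exists_subsuperset_card_eq
    (Finset.subset_univ (insert c (agreeSet (IsPartiteEdge part) χ p q)ᶜ)) (n := r - 1)
    (by
      have := Finset.card_insert_le c (agreeSet (IsPartiteEdge part) χ p q)ᶜ
      rw [Finset.card_compl, Fintype.card_fin] at this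
      omega)
    (by rw [Finset.card_univ, Fintype.card_fin]; omega)
  have hdA : d ∈ A := hcA (Finset.mem_insert_of_mem (Finset.mem_compl.mpr hd))
  have hcd : c ≠ d := fun h => hd (h ▸ hc)
  obtain ⟨v, ⟨hv, hvA⟩ | ⟨hv, hvA⟩⟩ :=
    exists_agreeSet_eq (by omega) hs hnc hpq hd hA ((Finset.subset_insert _ _).trans hcA)
  · subst hvA
    rcases mem_agreeSet_or_mem_agreeSet (by omega) hs hnc (hv ▸ hpq) hip.symm (hv ▸ hiq.symm)
      hA (hcA (Finset.mem_insert_self _ _)) hdA hcd with h | h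
    exacts [hcx h, hpx (mem_agreeSet.mp h)]
  · subst hvA
    rcases mem_agreeSet_or_mem_agreeSet (by omega) hs hnc (hv ▸ hpq.symm) hiq.symm
      (hv ▸ hip.symm) hA (hcA (Finset.mem_insert_self _ _)) hdA hcd with h | h
    exacts [hcq h, hqx (mem_agreeSet.mp h)]

theorem not_compl_agreeSet_subset (hr : 3 ≤ r) (hs : Spanning (IsPartiteEdge part) χ)
    (hnc : ¬ CoversBy (IsPartiteEdge part) χ r) {p q v : V} (hpq : part p ≠ part q)
    (hS : r + 1 ≤ (agreeSet (IsPartiteEdge part) χ p q).card)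
    {d : Fin (2 * r - 1)} (hd : d ∉ agreeSet (IsPartiteEdge part) χ p q)
    (hv : part v = part q) (hcard : (agreeSet (IsPartiteEdge part) χ p v).card = r - 1) :
    ¬ (agreeSet (IsPartiteEdge part) χ p q)ᶜ ⊆ agreeSet (IsPartiteEdge part) χ p v := by
  have : NeZero (2 * r - 1) := ⟨by omega⟩
  intro hsub
  set S := agreeSet (IsPartiteEdge part) χ p q
  set A := agreeSet (IsPartiteEdge part) χ p v
  obtain ⟨g, hgA, hgS⟩ := Finset.exists_mem_notMem_of_card_lt_card (s := Sᶜ) (t := A)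
    (by rw [Finset.card_compl, Fintype.card_fin]; omega)
  rw [Finset.mem_compl, not_not] at hgS
  obtain ⟨u, hu, hpu, -⟩ := exists_part_eq_not_monoConn (by omega) hs hnc g p p (part p)
  obtain ⟨i, -, hi⟩ := Finset.exists_mem_notMem_of_card_lt_card (s := {part p, part q})
    (t := Finset.univ) (by rw [Finset.card_univ, Fintype.card_fin]; grind [Finset.card_le_two])
  simp only [Finset.mem_insert, Finset.mem_singleton, not_or] at hi
  obtain ⟨x, hx, hdx, hSx⟩ := exists_part_eq_agreeSet_subset hr hs hnc hpq hS hd hi.1 hi.2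
  have hX : Set.InjOn part ↑({u, v, x} : Finset V) := by
    simpa using Set.injOn_triple (hu ▸ hv ▸ hpq) (hu ▸ hx ▸ Ne.symm hi.1) (hv ▸ hx ▸ Ne.symm hi.2)
  obtain ⟨γ, hconn, havoid⟩ := exists_color_connecting (by omega) hs hnc p {u, v, x}
    ((A.erase g).erase d) hX (by
      have hdA : d ∈ A.erase g :=
        Finset.mem_erase.mpr ⟨fun h => hd (h ▸ hgS), hsub (Finset.mem_compl.mpr hd)⟩
      have := Finset.card_le_three (a := u) (b := v) (c := x)
      rw [Finset.card_erase_of_mem hdA, Finset.card_erase_of_mem hgA]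
      omega)
  have hpv : MonoConn (IsPartiteEdge part) χ γ p v := by
    by_cases hγS : γ ∈ S
    · exact (mem_agreeSet.mp (hSx hγS)).trans (hconn x (by simp) v (by simp))
    · exact mem_agreeSet.mp (hsub (Finset.mem_compl.mpr hγS))
  have hγg : γ ≠ g := fun h => hpu (h ▸ hpv.trans (hconn v (by simp) u (by simp)))
  have hγd : γ ≠ d := fun h =>
    hdx (mem_agreeSet.mpr (h ▸ hpv.trans (hconn v (by simp) x (by simp))))
  exact havoid (Finset.mem_erase.mpr ⟨hγd, Finset.mem_erase.mpr ⟨hγg, mem_agreeSet.mpr hpv⟩⟩)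
    v (by simp) hpv

theorem card_agreeSet_le (hr : 3 ≤ r) (hs : Spanning (IsPartiteEdge part) χ)
    (hnc : ¬ CoversBy (IsPartiteEdge part) χ r) {a b : V} (hab : part a ≠ part b)
    {d : Fin (2 * r - 1)} (hd : d ∉ agreeSet (IsPartiteEdge part) χ a b) :
    (agreeSet (IsPartiteEdge part) χ a b).card ≤ r := by
  by_contra! hS
  obtain ⟨A, hSA, -, hA⟩ := Finset.exists_subsuperset_card_eq
    (Finset.subset_univ (agreeSet (IsPartiteEdge part) χ a b)ᶜ) (n := r - 1)
    (by rw [Finset.card_compl, Fintype.card_fin]; omega)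
    (by rw [Finset.card_univ, Fintype.card_fin]; omega)
  obtain ⟨v, ⟨hv, rfl⟩ | ⟨hv, rfl⟩⟩ := exists_agreeSet_eq (by omega) hs hnc hab hd hA hSA
  · exact not_compl_agreeSet_subset hr hs hnc hab hS hd hv hA hSA
  · rw [agreeSet_comm a b] at hS hd hSA
    exact not_compl_agreeSet_subset hr hs hnc hab.symm hS hd hv hA hSA

theorem part_eq_of_agreeSet_eq (hr : 3 ≤ r) (hs : Spanning (IsPartiteEdge part) χ)
    (hnc : ¬ CoversBy (IsPartiteEdge part) χ r) {a : V} {w : Finset (Fin (2 * r - 1)) → V}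
    (hw : ∀ A, A.card = r - 1 → agreeSet (IsPartiteEdge part) χ a (w A) = A)
    {A B : Finset (Fin (2 * r - 1))} (hA : A.card = r - 1) (hB : B.card = r - 1) :
    part (w A) = part (w B) :=
  Finset.apply_eq_of_forall_disjoint (by rw [Fintype.card_fin]; omega) (fun A => part (w A))
    (fun A B hA hB hAB => part_eq_of_le_card_symmDiff (by omega) hs hnc (by
      rw [hw A hA, hw B hB, Finset.symmDiff_eq_union hAB, Finset.card_union_of_disjoint hAB]
      omega)) hA hB

theorem exists_notMem_agreeSet (hr : 3 ≤ r) (hs : Spanning (IsPartiteEdge part) χ)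
    (hnc : ¬ CoversBy (IsPartiteEdge part) χ r) {a b : V} (hab : part a ≠ part b) :
    ∃ d, d ∉ agreeSet (IsPartiteEdge part) χ a b := by
  have : NeZero (2 * r - 1) := ⟨by omega⟩
  by_contra! hall
  have hsame : ∀ v, agreeSet (IsPartiteEdge part) χ a v = agreeSet (IsPartiteEdge part) χ b v :=
    fun v => Finset.ext fun c => by
      simp only [mem_agreeSet]
      exact ⟨(mem_agreeSet.mp (hall c)).symm.trans, (mem_agreeSet.mp (hall c)).trans⟩
  have hlow : ∀ v, r - 1 ≤ (agreeSet (IsPartiteEdge part) χ a v).card := fun v => by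
    by_cases hva : part a = part v
    · exact hsame v ▸ le_card_agreeSet (by omega) hs hnc (hva ▸ hab.symm)
    · exact le_card_agreeSet (by omega) hs hnc hva
  have hreal : ∀ A : Finset (Fin (2 * r - 1)), ∃ v, A.card = r - 1 →
      agreeSet (IsPartiteEdge part) χ a v = A := fun A => by
    by_cases hA : A.card = r - 1
    · obtain ⟨v, hv⟩ := exists_agreeSet_subset hnc (A := A)
        (by rw [Finset.card_compl, Fintype.card_fin, hA]; omega) a
      exact ⟨v, fun _ => Finset.eq_of_subset_of_card_le hv (hA ▸ hlow v)⟩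
    · exact ⟨a, fun h => absurd h hA⟩
  choose w hw using hreal
  obtain ⟨A₀, -, hA₀⟩ := Finset.exists_subset_card_eq
    (s := (Finset.univ : Finset (Fin (2 * r - 1)))) (n := r - 1)
    (by rw [Finset.card_univ, Fintype.card_fin]; omega)
  have : Nontrivial (Fin r) := Fin.nontrivial_iff_two_le.mpr (by omega)
  obtain ⟨i, hi⟩ := exists_ne (part (w A₀))
  obtain ⟨z, rfl, hz, -⟩ := exists_part_eq_not_monoConn (by omega) hs hnc 0 a a i
  obtain ⟨A, hA, hAz⟩ := Finset.exists_card_eq_le_card_symmDiff (Fintype.card_fin _) hr (hlow z)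
    fun h => hz (mem_agreeSet.mp (h ▸ Finset.mem_univ 0))
  rw [← hw A hA] at hAz
  exact hi ((part_eq_of_le_card_symmDiff (by omega) hs hnc hAz).symm.trans
    (part_eq_of_agreeSet_eq hr hs hnc hw hA hA₀))

end OddColors

theorem stmt_10_general {r : ℕ} (hr : 3 ≤ r)
    (part : V → Fin r)
    (χ : Finset V → Fin (2 * r - 1)) (hs : Spanning (IsPartiteEdge part) χ)
    (hnc : ¬ CoversBy (IsPartiteEdge part) χ r)
    (a b : V) (hab : part a ≠ part b) :
    r - 1 ≤ HamDist (IsPartiteEdge part) χ a b ∧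
      HamDist (IsPartiteEdge part) χ a b ≤ r := by
  have : NeZero (2 * r - 1) := ⟨by omega⟩
  have hsum := card_agreeSet_add_hamDist (E := IsPartiteEdge part) (χ := χ) a b
  have hlow := le_card_agreeSet (by omega) hs hnc hab
  obtain ⟨d, hd⟩ := exists_notMem_agreeSet hr hs hnc hab
  have hup := card_agreeSet_le hr hs hnc hab hd
  omega

theorem stmt_10 [Fintype V] {r : ℕ} (hr : 3 ≤ r)
    (part : V → Fin r) (hne : ∀ i : Fin r, ∃ v, part v = i)
    (χ : Finset V → Fin (2 * r - 1)) (hs : Spanning (IsPartiteEdge part) χ)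
    (hnc : ¬ CoversBy (IsPartiteEdge part) χ r)
    (a b : V) (hab : part a ≠ part b) :
    r - 1 ≤ HamDist (IsPartiteEdge part) χ a b ∧
      HamDist (IsPartiteEdge part) χ a b ≤ r :=
  stmt_10_general hr part χ hs hnc a b hab
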